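/- arXiv:2206.04723 — 6 statements merged into one kernel-verified Lean document; each statement's English description precedes it below -/
import Mathlib

section
/- Let F : E → ℝ be differentiable, L-Lipschitz smooth and μ-strongly convex (0 < μ ≤ L) with minimizer w*, let G : E → E be an arbitrary map, and let γ > 0 satisfy γ·L ≤ 1. Define iterates w^{(t+1)} = w^{(t)} − γ·G(w^{(t)}) from an initial point w^{(0)}. Then for every T ≥ 1, F(w^{(T)}) − F(w*) ≤ (1 − γμ)^T (F(w^{(0)}) − F(w*)) + (γ/2) Σ_{t=0}^{T−1} (1 − γμ)^{T−1−t} ‖∇F(w^{(t)}) − G(w^{(t)})‖². -/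
open InnerProductSpace

/-- Descent lemma: quadratic upper bound from Lipschitz gradient. -/
lemma descent_lemma
    {E : Type*} [NormedAddCommGroup E] [InnerProductSpace ℝ E] [CompleteSpace E]
    (F : E → ℝ) (F' : E → E)
    (hgrad : ∀ x, HasGradientAt F (F' x) x)
    (L : ℝ) (hL : 0 ≤ L)
    (hLip : ∀ w u, ‖F' w - F' u‖ ≤ L * ‖w - u‖)
    (w v : E) :
    F (w + v) ≤ F w + (inner ℝ (F' w) v : ℝ) + L / 2 * ‖v‖ ^ 2 := by
  set ψ : ℝ → ℝ := fun t => F (w + t • v) - t * (inner ℝ (F' w) v : ℝ) - L / 2 * t ^ 2 * ‖v‖ ^ 2 with hψ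
  have hc : ∀ t : ℝ, HasDerivAt (fun s : ℝ => w + s • v) v t := by
    intro t
    simpa using ((hasDerivAt_id t).smul_const v).const_add w
  have hFc : ∀ t : ℝ, HasDerivAt (fun s : ℝ => F (w + s • v))
      ((inner ℝ (F' (w + t • v)) v : ℝ)) t := by
    intro t
    have h1 := ((hgrad (w + t • v)).hasFDerivAt.comp_hasDerivAt t (hc t))
    exact h1
  have hψ' : ∀ t : ℝ, HasDerivAt ψ
      ((inner ℝ (F' (w + t • v)) v : ℝ) - (inner ℝ (F' w) v : ℝ) - L * t * ‖v‖ ^ 2) t := by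
    intro t
    have h2 : HasDerivAt (fun s : ℝ => s * (inner ℝ (F' w) v : ℝ)) (inner ℝ (F' w) v : ℝ) t := by
      simpa using (hasDerivAt_id t).mul_const (inner ℝ (F' w) v : ℝ)
    have h3 : HasDerivAt (fun s : ℝ => L / 2 * s ^ 2 * ‖v‖ ^ 2) (L * t * ‖v‖ ^ 2) t := by
      have := ((hasDerivAt_pow 2 t).const_mul (L / 2)).mul_const (‖v‖ ^ 2)
      exact this.congr_deriv (by rw [show (2:ℕ) - 1 = 1 from rfl]; push_cast; ring)
    exact ((hFc t).sub h2).sub h3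
  have hmono : AntitoneOn ψ (Set.Icc (0:ℝ) 1) := by
    apply antitoneOn_of_hasDerivWithinAt_nonpos (convex_Icc 0 1)
      (fun t _ => ((hψ' t).continuousAt).continuousWithinAt)
      (fun t ht => ((hψ' t).hasDerivWithinAt))
    intro t ht
    rw [interior_Icc] at ht
    have ht0 : 0 < t := ht.1
    have hbound : (inner ℝ (F' (w + t • v)) v : ℝ) - (inner ℝ (F' w) v : ℝ) ≤ L * t * ‖v‖ ^ 2 := by
      have := real_inner_le_norm (F' (w + t • v) - F' w) v
      rw [inner_sub_left] at this
      have hlip := hLip (w + t • v) w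
      have : (inner ℝ (F' (w + t • v)) v : ℝ) - (inner ℝ (F' w) v : ℝ) ≤
          ‖F' (w + t • v) - F' w‖ * ‖v‖ := this
      refine this.trans ?_
      have h4 : ‖F' (w + t • v) - F' w‖ ≤ L * (t * ‖v‖) := by
        have : ‖w + t • v - w‖ = t * ‖v‖ := by
          rw [add_sub_cancel_left, norm_smul, Real.norm_eq_abs, abs_of_pos ht0]
        rw [this] at hlip
        calc ‖F' (w + t • v) - F' w‖ ≤ L * ‖t • v‖ := by simpa using hLip (w + t • v) w
          _ = L * (t * ‖v‖) := by rw [norm_smul, Real.norm_eq_abs, abs_of_pos ht0]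
      calc ‖F' (w + t • v) - F' w‖ * ‖v‖ ≤ L * (t * ‖v‖) * ‖v‖ := by
            exact mul_le_mul_of_nonneg_right h4 (norm_nonneg v)
        _ = L * t * ‖v‖ ^ 2 := by ring
    linarith
  have := hmono (Set.mem_Icc.mpr ⟨le_refl 0, zero_le_one⟩) (Set.mem_Icc.mpr ⟨zero_le_one, le_refl 1⟩) zero_le_one
  simp only [hψ, one_smul, one_pow, one_mul, zero_smul, add_zero, zero_pow, mul_zero, zero_mul, sub_zero] at this
  linarith

/-- Convergence of biased gradient descent: if `F` is `L`-smooth and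
`μ`-strongly convex with minimizer `w*`, `γ L ≤ 1`, and the iterates follow
`w^{(t+1)} = w^{(t)} - γ • G (w^{(t)})` for an arbitrary map `G`, then for `T ≥ 1`,
`F(w^{(T)}) - F(w*) ≤ (1-γμ)^T (F(w^{(0)}) - F(w*))
  + (γ/2) Σ_{t<T} (1-γμ)^{T-1-t} ‖∇F(w^{(t)}) - G(w^{(t)})‖²`. -/
theorem stmt_1
    {E : Type*} [NormedAddCommGroup E] [InnerProductSpace ℝ E] [FiniteDimensional ℝ E]
    (F : E → ℝ) (F' : E → E)
    (hgrad : ∀ x, HasGradientAt F (F' x) x)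
    (L μ : ℝ) (hμ : 0 < μ) (hμL : μ ≤ L)
    (hLip : ∀ w u, ‖F' w - F' u‖ ≤ L * ‖w - u‖)
    (hsc : ∀ w u, F w + (inner ℝ (F' w) (u - w) : ℝ) + μ / 2 * ‖u - w‖ ^ 2 ≤ F u)
    (wstar : E) (hmin : ∀ u, F wstar ≤ F u)
    (G : E → E)
    (γ : ℝ) (hγ : 0 < γ) (hγL : γ * L ≤ 1)
    (w : ℕ → E) (hrec : ∀ t, w (t + 1) = w t - γ • G (w t))
    (T : ℕ) (hT : 1 ≤ T) :
    F (w T) - F wstar ≤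
      (1 - γ * μ) ^ T * (F (w 0) - F wstar) +
        γ / 2 * ∑ t ∈ Finset.range T, (1 - γ * μ) ^ (T - 1 - t) * ‖F' (w t) - G (w t)‖ ^ 2 := by
  have hL : 0 < L := lt_of_lt_of_le hμ hμL
  -- PL inequality
  have hPL : ∀ x : E, 2 * μ * (F x - F wstar) ≤ ‖F' x‖ ^ 2 := by
    intro x
    have h1 := hsc x wstar
    have h2 : -(‖F' x‖ * ‖wstar - x‖) ≤ (inner ℝ (F' x) (wstar - x) : ℝ) := by
      have := abs_real_inner_le_norm (F' x) (wstar - x)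
      nlinarith [abs_nonneg (inner ℝ (F' x) (wstar - x) : ℝ), le_abs_self (-(inner ℝ (F' x) (wstar - x) : ℝ)), neg_abs_le (inner ℝ (F' x) (wstar - x) : ℝ)]
    nlinarith [sq_nonneg (‖F' x‖ - μ * ‖wstar - x‖), norm_nonneg (F' x), norm_nonneg (wstar - x)]
  -- one-step inequality
  have hstep : ∀ t : ℕ, F (w (t + 1)) - F wstar ≤
      (1 - γ * μ) * (F (w t) - F wstar) + γ / 2 * ‖F' (w t) - G (w t)‖ ^ 2 := by
    intro t
    have hdesc := descent_lemma F F' hgrad L hL.le hLip (w t) (-(γ • G (w t)))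
    rw [← sub_eq_add_neg, ← hrec t] at hdesc
    have hnorm : ‖-(γ • G (w t))‖ ^ 2 = γ ^ 2 * ‖G (w t)‖ ^ 2 := by
      rw [norm_neg, norm_smul, Real.norm_eq_abs, abs_of_pos hγ, mul_pow]
    have hinner : (inner ℝ (F' (w t)) (-(γ • G (w t))) : ℝ) = -γ * (inner ℝ (F' (w t)) (G (w t)) : ℝ) := by
      rw [inner_neg_right, real_inner_smul_right]; ring
    rw [hnorm, hinner] at hdesc
    have hexp : ‖F' (w t) - G (w t)‖ ^ 2 = ‖F' (w t)‖ ^ 2 - 2 * (inner ℝ (F' (w t)) (G (w t)) : ℝ) + ‖G (w t)‖ ^ 2 := by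
      rw [← real_inner_self_eq_norm_sq, ← real_inner_self_eq_norm_sq, ← real_inner_self_eq_norm_sq]
      rw [inner_sub_sub_self, real_inner_comm (G (w t)) (F' (w t))]
      ring
    have hγ2 : L / 2 * (γ ^ 2 * ‖G (w t)‖ ^ 2) ≤ γ / 2 * ‖G (w t)‖ ^ 2 := by
      nlinarith [sq_nonneg (‖G (w t)‖), hγ.le]
    have hpl := hPL (w t)
    nlinarith [hpl]
  -- induction
  clear hT
  induction T with
  | zero => simp
  | succ T ih =>
    have hr : 0 ≤ 1 - γ * μ := by nlinarith
    calc F (w (T + 1)) - F wstar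
        ≤ (1 - γ * μ) * (F (w T) - F wstar) + γ / 2 * ‖F' (w T) - G (w T)‖ ^ 2 := hstep T
      _ ≤ (1 - γ * μ) * ((1 - γ * μ) ^ T * (F (w 0) - F wstar) +
            γ / 2 * ∑ t ∈ Finset.range T, (1 - γ * μ) ^ (T - 1 - t) * ‖F' (w t) - G (w t)‖ ^ 2)
            + γ / 2 * ‖F' (w T) - G (w T)‖ ^ 2 :=
          add_le_add_left (mul_le_mul_of_nonneg_left ih hr) _
      _ = (1 - γ * μ) ^ (T + 1) * (F (w 0) - F wstar) +
          γ / 2 * ∑ t ∈ Finset.range (T + 1), (1 - γ * μ) ^ (T + 1 - 1 - t) * ‖F' (w t) - G (w t)‖ ^ 2 := by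
          rw [Finset.sum_range_succ, Nat.add_sub_cancel, Nat.sub_self, pow_zero, one_mul]
          have hsum : ∑ t ∈ Finset.range T, (1 - γ * μ) ^ (T - t) * ‖F' (w t) - G (w t)‖ ^ 2
              = (1 - γ * μ) * ∑ t ∈ Finset.range T, (1 - γ * μ) ^ (T - 1 - t) * ‖F' (w t) - G (w t)‖ ^ 2 := by
            rw [Finset.mul_sum]
            refine Finset.sum_congr rfl fun t ht => ?_
            rw [Finset.mem_range] at ht
            have h5 : T - t = (T - 1 - t) + 1 := by omega
            rw [h5, pow_succ]
            ring
          rw [hsum, pow_succ]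
          ring
end

section
/- Under the quadratic federated setting, let w* ∈ E be a first-order stationary point of the global objective, i.e. E_c[∇F_c(w*)] = 0. Then G(w*) = − E_c[P_c ∇F_c(w*)], where P_c = (1/H) Σ_{h=0}^{H−1} (Id − (Id − η A_c)^h); in particular the average drift at optimum ρ = ‖G(w*)‖ satisfies ρ = ‖E_c[P_c ∇F_c(w*)]‖. -/
/-- In the quadratic federated setting, if `w*` is a stationary point of
the global objective (`E_c[∇F_c(w*)] = 0`), then `G(w*) = -E_c[P_c ∇F_c(w*)]`, where
`P_c = (1/H) Σ_{h<H} (Id - (Id - η A_c)^h)`; in particular the average drift at optimum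
`ρ = ‖G(w*)‖` equals `‖E_c[P_c ∇F_c(w*)]‖`. -/
theorem stmt_7
    {E : Type*} [NormedAddCommGroup E] [InnerProductSpace ℝ E] [FiniteDimensional ℝ E]
    {M : ℕ} (p : Fin M → ℝ) (hp : ∀ c, 0 ≤ p c) (hpsum : ∑ c, p c = 1)
    (A : Fin M → (E →L[ℝ] E)) (wstar : Fin M → E)
    (η : ℝ) (hη : 0 < η)
    (H : ℕ) (hH : 1 ≤ H)
    (wIter : Fin M → ℕ → E → E)
    (hIter0 : ∀ c w, wIter c 0 w = w)
    (hIterS : ∀ c h w, wIter c (h + 1) w = wIter c h w - η • (A c (wIter c h w - wstar c)))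
    (Gc : Fin M → E → E)
    (hGc : ∀ c w, Gc c w = (η * H)⁻¹ • (w - wIter c H w))
    (G : E → E) (hG : ∀ w, G w = ∑ c, p c • Gc c w)
    (wopt : E) (hstat : ∑ c, p c • (A c (wopt - wstar c)) = 0)
    (P : Fin M → (E →L[ℝ] E))
    (hP : ∀ c, P c = (H : ℝ)⁻¹ •
      ∑ h ∈ Finset.range H, ((1 : E →L[ℝ] E) - ((1 : E →L[ℝ] E) - η • A c) ^ h)) :
    G wopt = -∑ c, p c • (P c (A c (wopt - wstar c))) ∧
      ‖G wopt‖ = ‖∑ c, p c • (P c (A c (wopt - wstar c)))‖ := by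
  set x : Fin M → E := fun c => wopt - wstar c with hx
  set T : Fin M → (E →L[ℝ] E) := fun c => (1 : E →L[ℝ] E) - η • A c with hT
  have hTapp : ∀ c v, T c v = v - η • A c v := by intro c v; simp [hT]
  have hIterT : ∀ c h, wIter c h wopt - wstar c = ((T c) ^ h) (x c) := by
    intro c h
    induction h with
    | zero => simp [hIter0, hx]
    | succ n ih =>
      rw [hIterS, pow_succ']
      simp only [ContinuousLinearMap.mul_apply]
      rw [← ih, hTapp]
      abel
  have key : ∀ c n, x c - ((T c) ^ n) (x c) = η • ∑ h ∈ Finset.range n, ((T c) ^ h) (A c (x c)) := by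
    intro c n
    induction n with
    | zero => simp
    | succ n ih =>
      rw [Finset.sum_range_succ, smul_add]
      have h1 : ((T c) ^ (n + 1)) (x c) = ((T c) ^ n) (T c (x c)) := by
        rw [pow_succ]; simp [ContinuousLinearMap.mul_apply]
      have h2 : ((T c) ^ n) (x c) - ((T c) ^ (n+1)) (x c) = η • ((T c) ^ n) (A c (x c)) := by
        rw [h1, ← map_sub, hTapp, sub_sub_cancel, map_smul]
      calc x c - ((T c) ^ (n+1)) (x c)
          = (x c - ((T c) ^ n) (x c)) + (((T c) ^ n) (x c) - ((T c) ^ (n+1)) (x c)) := by abel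
        _ = _ := by rw [ih, h2]
  have hHne : (H : ℝ) ≠ 0 := by positivity
  have hGcval : ∀ c, Gc c wopt = (H : ℝ)⁻¹ • ∑ h ∈ Finset.range H, ((T c) ^ h) (A c (x c)) := by
    intro c
    rw [hGc]
    have : wopt - wIter c H wopt = x c - ((T c) ^ H) (x c) := by
      have := hIterT c H; rw [← this]; simp only [hx]; abel
    rw [this, key, mul_inv, smul_smul]
    congr 1
    field_simp
  have hPval : ∀ c, P c (A c (x c)) = A c (x c) - Gc c wopt := by
    intro c
    rw [hP, hGcval]
    simp only [ContinuousLinearMap.smul_apply, ContinuousLinearMap.sum_apply,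
      ContinuousLinearMap.sub_apply, ContinuousLinearMap.one_apply]
    simp only [hT, Finset.sum_sub_distrib, Finset.sum_const, Finset.card_range, smul_sub]
    rw [← Nat.cast_smul_eq_nsmul ℝ, smul_smul, inv_mul_cancel₀ hHne, one_smul]
  have hmain : G wopt = -∑ c, p c • (P c (A c (x c))) := by
    rw [hG]
    have : ∑ c, p c • (P c (A c (x c))) = ∑ c, p c • A c (x c) - ∑ c, p c • Gc c wopt := by
      rw [← Finset.sum_sub_distrib]
      refine Finset.sum_congr rfl fun c _ => ?_
      rw [hPval, smul_sub]
    rw [this, hstat, zero_sub, neg_neg]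
  exact ⟨hmain, by rw [hmain, norm_neg]⟩
end

section
/- Under the twice-differentiable federated setting with 0 < η ≤ 1/L, the averaged pseudo-gradient G satisfies, for all w, u ∈ E, μ̃‖w − u‖² ≤ ⟨G(w) − G(u), w − u⟩ ≤ L̃‖w − u‖², where μ̃ = (1 − (1 − ημ)^H)/(ηH) and L̃ = (1 + (1 − ημ)^H)/(ηH). -/
lemma contract_aux {E : Type*} [NormedAddCommGroup E] [InnerProductSpace ℝ E]
    (A : E →L[ℝ] E) (μ L η : ℝ) (hμ : 0 < μ) (hη : 0 < η) (hηL : η * L ≤ 1)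
    (hsym : ∀ v w : E, (inner ℝ (A v) w : ℝ) = (inner ℝ (A w) v : ℝ))
    (hlow : ∀ v : E, μ * ‖v‖ ^ 2 ≤ (inner ℝ (A v) v : ℝ))
    (hup : ∀ v : E, ‖A v‖ ≤ L * ‖v‖) (hμL : μ ≤ L) :
    ∀ v : E, ‖v - η • A v‖ ≤ (1 - η * μ) * ‖v‖ := by
  intro v
  set B : E → E := fun x => x - η • A x with hB
  have hκ : 0 ≤ 1 - η * μ := by nlinarith
  -- quadratic form bounds for B
  have hBup : ∀ x : E, (inner ℝ (B x) x : ℝ) ≤ (1 - η * μ) * ‖x‖ ^ 2 := by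
    intro x
    have h1 := hlow x
    have : (inner ℝ (B x) x : ℝ) = ‖x‖ ^ 2 - η * (inner ℝ (A x) x : ℝ) := by
      simp [hB, inner_sub_left, real_inner_smul_left, real_inner_self_eq_norm_sq]
    rw [this]; nlinarith
  have hBpos : ∀ x : E, 0 ≤ (inner ℝ (B x) x : ℝ) := by
    intro x
    have h1 : (inner ℝ (A x) x : ℝ) ≤ L * ‖x‖ ^ 2 := by
      calc (inner ℝ (A x) x : ℝ) ≤ ‖A x‖ * ‖x‖ := real_inner_le_norm _ _
        _ ≤ L * ‖x‖ * ‖x‖ := by have := hup x; have := norm_nonneg x; nlinarith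
        _ = L * ‖x‖ ^ 2 := by ring
    have : (inner ℝ (B x) x : ℝ) = ‖x‖ ^ 2 - η * (inner ℝ (A x) x : ℝ) := by
      simp [hB, inner_sub_left, real_inner_smul_left, real_inner_self_eq_norm_sq]
    rw [this]
    nlinarith [sq_nonneg ‖x‖]
  have hBsym : ∀ x y : E, (inner ℝ (B x) y : ℝ) = (inner ℝ (B y) x : ℝ) := by
    intro x y
    simp [hB, inner_sub_left, real_inner_smul_left, hsym x y, real_inner_comm x y]
  -- Cauchy-Schwarz for the PSD form
  have hCS : ∀ x y : E, (inner ℝ (B x) y : ℝ) ^ 2 ≤ (inner ℝ (B x) x : ℝ) * (inner ℝ (B y) y : ℝ) := by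
    intro x y
    have hq : ∀ t : ℝ, 0 ≤ (inner ℝ (B y) y : ℝ) * (t * t) + (2 * (inner ℝ (B x) y : ℝ)) * t
        + (inner ℝ (B x) x : ℝ) := by
      intro t
      have hexp : (inner ℝ (B (x + t • y)) (x + t • y) : ℝ)
          = (inner ℝ (B y) y : ℝ) * (t * t) + (2 * (inner ℝ (B x) y : ℝ)) * t
            + (inner ℝ (B x) x : ℝ) := by
        have hBadd : B (x + t • y) = B x + t • B y := by
          simp [hB, smul_sub, smul_smul, mul_comm]
          module
        rw [hBadd]
        rw [inner_add_left, inner_add_right, inner_add_right, real_inner_smul_left,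
          real_inner_smul_left, real_inner_smul_right, real_inner_smul_right,
          hBsym y x]
        ring
      rw [← hexp]; exact hBpos _
    have hd := discrim_le_zero hq
    rw [discrim] at hd
    nlinarith
  -- apply with y = B v
  have key := hCS v (B v)
  have h1 : (inner ℝ (B v) (B v) : ℝ) = ‖B v‖ ^ 2 := real_inner_self_eq_norm_sq _
  have h2 : (inner ℝ (B (B v)) (B v) : ℝ) ≤ (1 - η * μ) * ‖B v‖ ^ 2 := hBup _
  have h3 : (inner ℝ (B v) v : ℝ) ≤ (1 - η * μ) * ‖v‖ ^ 2 := hBup v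
  have h4 : 0 ≤ (inner ℝ (B v) v : ℝ) := hBpos v
  have h5 : 0 ≤ (inner ℝ (B (B v)) (B v) : ℝ) := hBpos _
  have hBv : (‖B v‖ ^ 2) ^ 2 ≤ ((1 - η * μ) * ‖v‖ ^ 2) * ((1 - η * μ) * ‖B v‖ ^ 2) := by
    calc (‖B v‖ ^ 2) ^ 2 = (inner ℝ (B v) (B v) : ℝ) ^ 2 := by rw [h1]
      _ ≤ (inner ℝ (B v) v : ℝ) * (inner ℝ (B (B v)) (B v) : ℝ) := key
      _ ≤ ((1 - η * μ) * ‖v‖ ^ 2) * ((1 - η * μ) * ‖B v‖ ^ 2) := by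
          apply mul_le_mul h3 h2 h5
          positivity
  have : ‖B v‖ ≤ (1 - η * μ) * ‖v‖ := by
    rcases eq_or_lt_of_le (norm_nonneg (B v)) with h0 | h0
    · rw [← h0]; positivity
    · have h0sq : 0 < ‖B v‖ ^ 2 := by positivity
      have hs : ‖B v‖ ^ 2 * ‖B v‖ ^ 2 ≤ ((1 - η * μ) * ‖v‖) ^ 2 * ‖B v‖ ^ 2 := by
        nlinarith [hBv]
      have hs2 : ‖B v‖ ^ 2 ≤ ((1 - η * μ) * ‖v‖) ^ 2 := le_of_mul_le_mul_right hs h0sq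
      have := Real.sqrt_le_sqrt hs2
      rwa [Real.sqrt_sq (norm_nonneg _), Real.sqrt_sq (by positivity)] at this
  simpa [hB] using this


lemma hess_symm_aux {E : Type*} [NormedAddCommGroup E] [InnerProductSpace ℝ E] [CompleteSpace E]
    (f : E → ℝ) (g : E → E) (A : E → (E →L[ℝ] E))
    (hgrad : ∀ x, HasGradientAt f (g x) x)
    (hhess : ∀ x, HasFDerivAt g (A x) x) (x v w : E) :
    (inner ℝ (A x v) w : ℝ) = (inner ℝ (A x w) v : ℝ) := by
  have hf : ∀ y, HasFDerivAt f (innerSL ℝ (g y)) y := fun y => (hgrad y).hasFDerivAt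
  have hf'' : HasFDerivAt (fun y => innerSL ℝ (g y)) ((innerSL ℝ).comp (A x)) x :=
    (innerSL ℝ).hasFDerivAt.comp x (hhess x)
  have := second_derivative_symmetric hf hf'' v w
  simpa using this

/-- In the twice-differentiable federated setting with `0 < η ≤ 1/L`,
the averaged pseudo-gradient `G` is strongly monotone and smooth:
`μ̃‖w-u‖² ≤ ⟨G(w) - G(u), w-u⟩ ≤ L̃‖w-u‖²` with
`μ̃ = (1 - (1-ημ)^H)/(ηH)` and `L̃ = (1 + (1-ημ)^H)/(ηH)`. -/
theorem stmt_11
    {E : Type*} [NormedAddCommGroup E] [InnerProductSpace ℝ E] [FiniteDimensional ℝ E]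
    {M : ℕ} (p : Fin M → ℝ) (hp : ∀ c, 0 ≤ p c) (hpsum : ∑ c, p c = 1)
    (Fc : Fin M → E → ℝ) (Fc' : Fin M → E → E) (Fc'' : Fin M → E → (E →L[ℝ] E))
    (hgrad : ∀ c x, HasGradientAt (Fc c) (Fc' c x) x)
    (hhess : ∀ c x, HasFDerivAt (Fc' c) (Fc'' c x) x)
    (hcont : ∀ c, Continuous (Fc'' c))
    (μ L : ℝ) (hμ : 0 < μ) (hμL : μ ≤ L)
    (hlow : ∀ c (x v : E), μ * ‖v‖ ^ 2 ≤ (inner ℝ (Fc'' c x v) v : ℝ))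
    (hup : ∀ c (x v : E), ‖Fc'' c x v‖ ≤ L * ‖v‖)
    (η : ℝ) (hη : 0 < η) (hηL : η ≤ 1 / L)
    (H : ℕ) (hH : 1 ≤ H)
    (wIter : Fin M → ℕ → E → E)
    (hIter0 : ∀ c w, wIter c 0 w = w)
    (hIterS : ∀ c h w, wIter c (h + 1) w = wIter c h w - η • Fc' c (wIter c h w))
    (G : E → E)
    (hG : ∀ w, G w = ∑ c, p c • ((η * H)⁻¹ • (w - wIter c H w))) :
    ∀ w u : E,
      (1 - (1 - η * μ) ^ H) / (η * H) * ‖w - u‖ ^ 2 ≤ (inner ℝ (G w - G u) (w - u) : ℝ) ∧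
      (inner ℝ (G w - G u) (w - u) : ℝ) ≤ (1 + (1 - η * μ) ^ H) / (η * H) * ‖w - u‖ ^ 2 := by
  haveI : CompleteSpace E := FiniteDimensional.complete ℝ E
  have hL : 0 < L := lt_of_lt_of_le hμ hμL
  have hηL1 : η * L ≤ 1 := by rw [le_div_iff₀ hL] at hηL; linarith
  set κ : ℝ := 1 - η * μ with hκdef
  have hκ0 : 0 ≤ κ := by nlinarith
  -- each local GD step is a κ-contraction
  have step : ∀ (c : Fin M) (x y : E),
      ‖(x - η • Fc' c x) - (y - η • Fc' c y)‖ ≤ κ * ‖x - y‖ := by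
    intro c x y
    have hd : ∀ z : E, HasFDerivAt (fun z => z - η • Fc' c z)
        (ContinuousLinearMap.id ℝ E - η • Fc'' c z) z := fun z =>
      (hasFDerivAt_id z).sub ((hhess c z).const_smul η)
    have hbound : ∀ z : E, ‖ContinuousLinearMap.id ℝ E - η • Fc'' c z‖ ≤ κ := by
      intro z
      apply ContinuousLinearMap.opNorm_le_bound _ hκ0
      intro v
      have := contract_aux (Fc'' c z) μ L η hμ hη hηL1
        (fun a b => hess_symm_aux (Fc c) (Fc' c) (Fc'' c) (hgrad c) (hhess c) z a b)
        (fun a => hlow c z a) (fun a => hup c z a) hμL v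
      simpa using this
    have := convex_univ.norm_image_sub_le_of_norm_hasFDerivWithin_le
      (f := fun z : E => z - η • Fc' c z)
      (fun z _ => (hd z).hasFDerivWithinAt) (fun z _ => hbound z)
      (Set.mem_univ y) (Set.mem_univ x)
    simpa [norm_sub_rev x y] using this
  intro w u
  -- Lipschitz bound on the iterates
  have lip : ∀ (c : Fin M) (h : ℕ), ‖wIter c h w - wIter c h u‖ ≤ κ ^ h * ‖w - u‖ := by
    intro c h
    induction h with
    | zero => simp [hIter0]
    | succ n ih =>
      rw [hIterS, hIterS]
      calc ‖(wIter c n w - η • Fc' c (wIter c n w)) - (wIter c n u - η • Fc' c (wIter c n u))‖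
          ≤ κ * ‖wIter c n w - wIter c n u‖ := step c _ _
        _ ≤ κ * (κ ^ n * ‖w - u‖) := by
            exact mul_le_mul_of_nonneg_left ih hκ0
        _ = κ ^ (n + 1) * ‖w - u‖ := by ring
  have hH0 : 0 < (H : ℝ) := by exact_mod_cast Nat.lt_of_lt_of_le Nat.zero_lt_one hH
  have hs0 : 0 < (η * (H : ℝ))⁻¹ := by positivity
  set s : ℝ := (η * (H : ℝ))⁻¹ with hs
  set N : ℝ := ‖w - u‖ ^ 2 with hN
  have hN0 : 0 ≤ N := by positivity
  -- expand the inner product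
  have hGdiff : G w - G u = ∑ c, p c • (s • ((w - u) - (wIter c H w - wIter c H u))) := by
    rw [hG w, hG u, ← Finset.sum_sub_distrib]
    congr 1; ext c
    rw [← smul_sub, ← smul_sub]
    congr 2
    abel
  have hinner : (inner ℝ (G w - G u) (w - u) : ℝ)
      = ∑ c, p c * (s * (N - (inner ℝ (wIter c H w - wIter c H u) (w - u) : ℝ))) := by
    rw [hGdiff, sum_inner]
    congr 1; ext c
    rw [real_inner_smul_left, real_inner_smul_left, inner_sub_left,
      real_inner_self_eq_norm_sq]
  have hterm : ∀ c : Fin M, |(inner ℝ (wIter c H w - wIter c H u) (w - u) : ℝ)| ≤ κ ^ H * N := by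
    intro c
    calc |(inner ℝ (wIter c H w - wIter c H u) (w - u) : ℝ)|
        ≤ ‖wIter c H w - wIter c H u‖ * ‖w - u‖ := abs_real_inner_le_norm _ _
      _ ≤ (κ ^ H * ‖w - u‖) * ‖w - u‖ :=
          mul_le_mul_of_nonneg_right (lip c H) (norm_nonneg _)
      _ = κ ^ H * N := by rw [hN]; ring
  have hκH0 : 0 ≤ κ ^ H := pow_nonneg hκ0 H
  constructor
  · rw [hinner]
    have hlb : ∀ c : Fin M, p c * (s * ((1 - κ ^ H) * N))
        ≤ p c * (s * (N - (inner ℝ (wIter c H w - wIter c H u) (w - u) : ℝ))) := by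
      intro c
      apply mul_le_mul_of_nonneg_left _ (hp c)
      apply mul_le_mul_of_nonneg_left _ (le_of_lt hs0)
      have := (abs_le.mp (hterm c)).2
      nlinarith
    calc (1 - κ ^ H) / (η * H) * N = ∑ c, p c * (s * ((1 - κ ^ H) * N)) := by
          rw [← Finset.sum_mul, hpsum, one_mul, hs, div_eq_inv_mul]
          ring
      _ ≤ _ := Finset.sum_le_sum (fun c _ => hlb c)
  · rw [hinner]
    have hub : ∀ c : Fin M, p c * (s * (N - (inner ℝ (wIter c H w - wIter c H u) (w - u) : ℝ)))
        ≤ p c * (s * ((1 + κ ^ H) * N)) := by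
      intro c
      apply mul_le_mul_of_nonneg_left _ (hp c)
      apply mul_le_mul_of_nonneg_left _ (le_of_lt hs0)
      have := (abs_le.mp (hterm c)).1
      nlinarith
    calc ∑ c, p c * (s * (N - (inner ℝ (wIter c H w - wIter c H u) (w - u) : ℝ)))
        ≤ ∑ c, p c * (s * ((1 + κ ^ H) * N)) := Finset.sum_le_sum (fun c _ => hub c)
      _ = (1 + κ ^ H) / (η * H) * N := by
          rw [← Finset.sum_mul, hpsum, one_mul, hs, div_eq_inv_mul]
          ring
end

section
/- Let G : E → E be a map satisfying, for some constants 0 < m ≤ ℓ and all w, u ∈ E, the strong monotonicity ⟨G(w) − G(u), w − u⟩ ≥ m‖w − u‖² and the co-coercivity ‖G(w) − G(u)‖² ≤ ℓ⟨G(w) − G(u), w − u⟩. Let γ > 0 satisfy γℓ ≤ 1/4, let w* ∈ E be arbitrary, and set w⁺ = w − γ G(w). Then ‖w⁺ − w*‖² ≤ (1 − γm)‖w − w*‖² + (5γ/(2m))‖G(w*)‖². -/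
set_option maxHeartbeats 1600000 in
/-- One-step contraction for a strongly monotone, co-coercive map:
if `⟨G(w) - G(u), w-u⟩ ≥ m‖w-u‖²` and `‖G(w) - G(u)‖² ≤ ℓ⟨G(w) - G(u), w-u⟩` for all
`w, u`, with `0 < m ≤ ℓ`, `γ > 0`, `γℓ ≤ 1/4`, and `w⁺ = w - γ G(w)`, then
`‖w⁺ - w*‖² ≤ (1 - γm)‖w - w*‖² + (5γ/(2m))‖G(w*)‖²`. -/
theorem stmt_14
    {E : Type*} [NormedAddCommGroup E] [InnerProductSpace ℝ E] [FiniteDimensional ℝ E]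
    (G : E → E) (m ℓ : ℝ) (hm : 0 < m) (hmℓ : m ≤ ℓ)
    (hmono : ∀ w u : E, m * ‖w - u‖ ^ 2 ≤ (inner ℝ (G w - G u) (w - u) : ℝ))
    (hcoco : ∀ w u : E, ‖G w - G u‖ ^ 2 ≤ ℓ * (inner ℝ (G w - G u) (w - u) : ℝ))
    (γ : ℝ) (hγ : 0 < γ) (hγℓ : γ * ℓ ≤ 1 / 4)
    (wstar w : E) :
    ‖(w - γ • G w) - wstar‖ ^ 2 ≤
      (1 - γ * m) * ‖w - wstar‖ ^ 2 + 5 * γ / (2 * m) * ‖G wstar‖ ^ 2 := by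
  set d := w - wstar with hd
  set g := G w - G wstar with hg
  set s := G wstar with hs
  have h1 : m * ‖d‖ ^ 2 ≤ (inner ℝ g d : ℝ) := hmono w wstar
  have h2 : ‖g‖ ^ 2 ≤ ℓ * (inner ℝ g d : ℝ) := hcoco w wstar
  -- expansion
  have hexp : ‖(w - γ • G w) - wstar‖ ^ 2
      = ‖d‖ ^ 2 - 2 * γ * (inner ℝ (G w) d : ℝ) + γ ^ 2 * ‖G w‖ ^ 2 := by
    have hrw : (w - γ • G w) - wstar = d - γ • G w := by rw [hd]; abel
    rw [hrw, @norm_sub_sq_real, real_inner_smul_right, norm_smul,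
      real_inner_comm d (G w)]
    simp [abs_of_pos hγ]
    ring
  have hinner : (inner ℝ (G w) d : ℝ) = (inner ℝ g d : ℝ) + (inner ℝ s d : ℝ) := by
    have hGws : G w = g + s := by rw [hg, hs]; abel
    rw [hGws, inner_add_left]
  have hGw : ‖G w‖ ^ 2 ≤ 2 * ‖g‖ ^ 2 + 2 * ‖s‖ ^ 2 := by
    have hGws : G w = g + s := by rw [hg, hs]; abel
    rw [hGws]
    have h := norm_add_le g s
    nlinarith [norm_nonneg g, norm_nonneg s, sq_nonneg (‖g‖ - ‖s‖), norm_nonneg (g + s)]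
  have hcs' : -(inner ℝ s d : ℝ) ≤ ‖s‖ * ‖d‖ := by
    have h := abs_real_inner_le_norm s d
    have := neg_abs_le (inner ℝ s d : ℝ); linarith
  have hγm : γ * m ≤ 1 / 4 := le_trans (by nlinarith) hγℓ
  have hgd : 0 ≤ (inner ℝ g d : ℝ) := le_trans (by positivity) h1
  rw [hexp, hinner]
  -- bound on γ²‖Gw‖²
  have key : γ ^ 2 * ‖G w‖ ^ 2 ≤ 2 * γ ^ 2 * ℓ * (inner ℝ g d : ℝ) + 2 * γ ^ 2 * ‖s‖ ^ 2 := by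
    nlinarith [sq_nonneg γ]
  have hγℓ2 : 2 * γ ^ 2 * ℓ ≤ γ / 2 := by nlinarith
  have kA : 2 * γ ^ 2 * ℓ * (inner ℝ g d : ℝ) ≤ (γ / 2) * (inner ℝ g d : ℝ) :=
    mul_le_mul_of_nonneg_right hγℓ2 hgd
  have h2γ2 : 2 * γ ^ 2 ≤ γ / (2 * m) := by
    rw [le_div_iff₀ (by positivity)]
    nlinarith
  have kB : 2 * γ ^ 2 * ‖s‖ ^ 2 ≤ (γ / (2 * m)) * ‖s‖ ^ 2 :=
    mul_le_mul_of_nonneg_right h2γ2 (sq_nonneg _)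
  -- Young's inequality term
  have hyoung : 2 * γ * (‖s‖ * ‖d‖) ≤ γ * (m / 2) * ‖d‖ ^ 2 + γ * (2 / m) * ‖s‖ ^ 2 := by
    have hY : 2 * m * (‖s‖ * ‖d‖) ≤ m ^ 2 / 2 * ‖d‖ ^ 2 + 2 * ‖s‖ ^ 2 := by
      nlinarith [sq_nonneg (m * ‖d‖ - 2 * ‖s‖)]
    have h3 := mul_le_mul_of_nonneg_left hY (le_of_lt (div_pos hγ hm))
    have hmne : m ≠ 0 := ne_of_gt hm
    have e1 : γ / m * (2 * m * (‖s‖ * ‖d‖)) = 2 * γ * (‖s‖ * ‖d‖) := by field_simp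
    have e2 : γ / m * (m ^ 2 / 2 * ‖d‖ ^ 2 + 2 * ‖s‖ ^ 2)
        = γ * (m / 2) * ‖d‖ ^ 2 + γ * (2 / m) * ‖s‖ ^ 2 := by field_simp
    rw [e1, e2] at h3; exact h3
  have hcs2 : -(2 * γ * (inner ℝ s d : ℝ)) ≤ 2 * γ * (‖s‖ * ‖d‖) := by nlinarith
  have hmono2 : -(3 * γ / 2) * (inner ℝ g d : ℝ) ≤ -(3 * γ / 2) * (m * ‖d‖ ^ 2) := by
    have : (0:ℝ) ≤ 3 * γ / 2 := by positivity
    nlinarith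
  have hdiv : γ * (2 / m) + γ / (2 * m) = 5 * γ / (2 * m) := by field_simp; ring
  rw [← hdiv]
  linarith
end

section
/- Under the twice-differentiable federated setting, let w* be the minimizer of the global objective F = E_c[F_c] and let ρ = ‖G(w*)‖ denote the average drift at optimum. Consider deterministic FedAvg iterates w^{(t+1)} = w^{(t)} − αηH·G(w^{(t)}) with server learning rate 0 < α ≤ 1/8 and local learning rate 0 < η ≤ min{1/L, 1/(μH)}. Then for every T ≥ 0, ‖w^{(T)} − w*‖² ≤ (1 − αηHμ/2)^T ‖w^{(0)} − w*‖² + 20ρ²/μ². -/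
open InnerProductSpace

lemma sym_aux {E : Type*} [NormedAddCommGroup E] [InnerProductSpace ℝ E] [FiniteDimensional ℝ E]
    (f : E → ℝ) (f' : E → E) (f'' : E → (E →L[ℝ] E))
    (hgrad : ∀ x, HasGradientAt f (f' x) x)
    (hhess : ∀ x, HasFDerivAt f' (f'' x) x) (x v w : E) :
    (inner ℝ (f'' x v) w : ℝ) = inner ℝ (f'' x w) v := by
  let D : E →L[ℝ] (E →L[ℝ] ℝ) :=
    (InnerProductSpace.toDual ℝ E).toContinuousLinearEquiv.toContinuousLinearMap
  have hD : ∀ z, HasFDerivAt (fun y => (toDual ℝ E) (f' y)) (D.comp (f'' z)) z := by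
    intro z
    exact D.hasFDerivAt.comp z (hhess z)
  have := second_derivative_symmetric (f := f) (f' := fun y => toDual ℝ E (f' y))
    (f'' := D.comp (f'' x)) (fun y => (hgrad y).hasFDerivAt) (hD x) v w
  simpa [D, InnerProductSpace.toDual_apply_apply, real_inner_comm] using this

lemma key_op {E : Type*} [NormedAddCommGroup E] [InnerProductSpace ℝ E]
    (A : E →L[ℝ] E) (μ L : ℝ) (hμ : 0 < μ) (hμL : μ ≤ L)
    (hsym : ∀ v w, (inner ℝ (A v) w : ℝ) = inner ℝ (A w) v)
    (hlow : ∀ v, μ * ‖v‖ ^ 2 ≤ (inner ℝ (A v) v : ℝ))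
    (hup : ∀ v, ‖A v‖ ≤ L * ‖v‖) (v : E) :
    ‖A v‖ ^ 2 ≤ L * (inner ℝ (A v) v : ℝ) := by
  have hL : 0 < L := lt_of_lt_of_le hμ hμL
  have h0 : ∀ w, (0:ℝ) ≤ inner ℝ (A w) w := fun w =>
    le_trans (by positivity) (hlow w)
  have key := h0 (v - L⁻¹ • A v)
  have expand : (inner ℝ (A (v - L⁻¹ • A v)) (v - L⁻¹ • A v) : ℝ)
      = inner ℝ (A v) v - L⁻¹ * inner ℝ (A v) (A v) - L⁻¹ * inner ℝ (A (A v)) v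
        + L⁻¹ * L⁻¹ * inner ℝ (A (A v)) (A v) := by
    simp only [map_sub, map_smul, inner_sub_left, inner_sub_right,
      real_inner_smul_left, real_inner_smul_right, smul_eq_mul]
    ring
  have hsym2 : (inner ℝ (A (A v)) v : ℝ) = inner ℝ (A v) (A v) := by
    rw [hsym (A v) v, real_inner_comm]
  have hCS : (inner ℝ (A (A v)) (A v) : ℝ) ≤ L * ‖A v‖ ^ 2 := by
    calc (inner ℝ (A (A v)) (A v) : ℝ) ≤ ‖A (A v)‖ * ‖A v‖ := real_inner_le_norm _ _
    _ ≤ (L * ‖A v‖) * ‖A v‖ := by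
        apply mul_le_mul_of_nonneg_right (hup _) (norm_nonneg _)
    _ = L * ‖A v‖ ^ 2 := by ring
  have hinner : (inner ℝ (A v) (A v) : ℝ) = ‖A v‖ ^ 2 := real_inner_self_eq_norm_sq _
  rw [expand, hsym2, hinner] at key
  have h1 : L⁻¹ * L⁻¹ * (inner ℝ (A (A v)) (A v) : ℝ) ≤ L⁻¹ * ‖A v‖ ^ 2 := by
    have h2 := mul_le_mul_of_nonneg_left hCS (by positivity : (0:ℝ) ≤ L⁻¹ * L⁻¹)
    have h3 : L⁻¹ * L⁻¹ * (L * ‖A v‖ ^ 2) = L⁻¹ * ‖A v‖ ^ 2 := by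
      field_simp
    linarith
  have h4 : L⁻¹ * ‖A v‖ ^ 2 ≤ (inner ℝ (A v) v : ℝ) := by linarith
  have h5 := mul_le_mul_of_nonneg_left h4 hL.le
  have h6 : L * (L⁻¹ * ‖A v‖ ^ 2) = ‖A v‖ ^ 2 := by field_simp
  linarith

lemma step_norm {E : Type*} [NormedAddCommGroup E] [InnerProductSpace ℝ E]
    (A : E →L[ℝ] E) (μ L η : ℝ) (hμ : 0 < μ) (hμL : μ ≤ L) (hη : 0 < η) (hηL : η * L ≤ 1)
    (hsym : ∀ v w, (inner ℝ (A v) w : ℝ) = inner ℝ (A w) v)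
    (hlow : ∀ v, μ * ‖v‖ ^ 2 ≤ (inner ℝ (A v) v : ℝ))
    (hup : ∀ v, ‖A v‖ ≤ L * ‖v‖) (v : E) :
    ‖v - η • A v‖ ^ 2 ≤ (1 - η * μ) * ‖v‖ ^ 2 := by
  have hkey := key_op A μ L hμ hμL hsym hlow hup v
  have hlo := hlow v
  have h0 : (0:ℝ) ≤ inner ℝ (A v) v := le_trans (by positivity) hlo
  have expand : ‖v - η • A v‖ ^ 2
      = ‖v‖ ^ 2 - 2 * (η * inner ℝ (A v) v) + η ^ 2 * ‖A v‖ ^ 2 := by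
    rw [norm_sub_sq_real, real_inner_smul_right, norm_smul]
    have : (inner ℝ v (A v) : ℝ) = inner ℝ (A v) v := real_inner_comm _ _
    rw [this]
    simp [Real.norm_eq_abs, mul_pow, sq_abs]
  rw [expand]
  have h3 : η ^ 2 * ‖A v‖ ^ 2 ≤ η * (inner ℝ (A v) v : ℝ) := by
    calc η ^ 2 * ‖A v‖ ^ 2 ≤ η ^ 2 * (L * inner ℝ (A v) v) :=
          mul_le_mul_of_nonneg_left hkey (sq_nonneg η)
    _ = (η * L) * (η * inner ℝ (A v) v) := by ring
    _ ≤ 1 * (η * inner ℝ (A v) v) :=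
          mul_le_mul_of_nonneg_right hηL (by positivity)
    _ = η * inner ℝ (A v) v := one_mul _
  have h4 := mul_le_mul_of_nonneg_left hlo hη.le
  nlinarith

lemma gd_step_lip {E : Type*} [NormedAddCommGroup E] [InnerProductSpace ℝ E]
    (F' : E → E) (F'' : E → (E →L[ℝ] E)) (hhess : ∀ x, HasFDerivAt F' (F'' x) x)
    (μ η : ℝ) (hημ : η * μ ≤ 1)
    (hstep : ∀ z v, ‖v - η • F'' z v‖ ^ 2 ≤ (1 - η * μ) * ‖v‖ ^ 2)
    (x y : E) :
    ‖(x - η • F' x) - (y - η • F' y)‖ ≤ Real.sqrt (1 - η * μ) * ‖x - y‖ := by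
  set b := Real.sqrt (1 - η * μ) with hb
  have hder : ∀ z ∈ (Set.univ : Set E), HasFDerivWithinAt (fun w => w - η • F' w)
      (ContinuousLinearMap.id ℝ E - η • F'' z) Set.univ z := by
    intro z _
    exact ((hasFDerivAt_id z).sub ((hhess z).const_smul η)).hasFDerivWithinAt
  have hbound : ∀ z ∈ (Set.univ : Set E), ‖ContinuousLinearMap.id ℝ E - η • F'' z‖ ≤ b := by
    intro z _
    refine ContinuousLinearMap.opNorm_le_bound _ (Real.sqrt_nonneg _) fun v => ?_
    have h1 : ‖(ContinuousLinearMap.id ℝ E - η • F'' z) v‖ = ‖v - η • F'' z v‖ := by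
      simp
    rw [h1]
    have h2 := hstep z v
    have h3 : ‖v - η • F'' z v‖ ≤ Real.sqrt ((1 - η * μ) * ‖v‖ ^ 2) := by
      rw [← Real.sqrt_sq (norm_nonneg (v - η • F'' z v))]
      exact Real.sqrt_le_sqrt h2
    rw [Real.sqrt_mul (by linarith), Real.sqrt_sq (norm_nonneg v)] at h3
    exact h3
  have := convex_univ.norm_image_sub_le_of_norm_hasFDerivWithin_le hder hbound
    (Set.mem_univ y) (Set.mem_univ x)
  simpa using this

lemma beta_bound (x : ℝ) (H : ℕ) (hx0 : 0 ≤ x) (hx1 : x ≤ 1) (hy : (H:ℝ) * x ≤ 1) :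
    (1 - x) ^ H ≤ (1 - (H:ℝ) * x / 3) ^ 2 := by
  set y := (H:ℝ) * x with hydef
  have hy0 : 0 ≤ y := by positivity
  have h1x : 0 ≤ 1 - x := by linarith
  have hbase0 : 0 ≤ (1 - x) * (1 + x/2)^2 := by nlinarith
  have hbase1 : (1 - x) * (1 + x/2)^2 ≤ 1 := by
    nlinarith [sq_nonneg x, mul_nonneg (sq_nonneg x) hx0]
  have hprod : (1 - x)^H * ((1 + x/2)^H)^2 ≤ 1 := by
    have e : (1 - x)^H * ((1 + x/2)^H)^2 = ((1 - x) * (1 + x/2)^2)^H := by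
      rw [mul_pow, ← pow_mul, ← pow_mul, Nat.mul_comm]
    rw [e]
    exact pow_le_one₀ hbase0 hbase1
  have hbern : 1 + y/2 ≤ (1 + x/2)^H := by
    have h := one_add_mul_le_pow (a := x/2) (by linarith) H
    have : (H:ℝ) * (x/2) = y/2 := by rw [hydef]; ring
    linarith
  have hsq : (1 + y/2)^2 ≤ ((1 + x/2)^H)^2 :=
    pow_le_pow_left₀ (by positivity) hbern 2
  have h2 : (1 - x)^H * (1 + y/2)^2 ≤ 1 :=
    le_trans (mul_le_mul_of_nonneg_left hsq (pow_nonneg h1x H)) hprod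
  have h3 : (1:ℝ) ≤ (1 - y/3)^2 * (1 + y/2)^2 := by
    nlinarith [mul_nonneg hy0 (by linarith : (0:ℝ) ≤ 1 - y), sq_nonneg (y - y^2)]
  have hpos : (0:ℝ) < (1 + y/2)^2 := by positivity
  have := h2.trans h3
  exact le_of_mul_le_mul_right this hpos

set_option maxHeartbeats 1000000

lemma sq_rec (s κ g μ u r : ℝ) (hs0 : 0 < s) (hs : s ≤ 1/8) (hκ0 : 0 ≤ κ)
    (hκ : κ ≤ 1 - s/3) (hμ : 0 < μ) (hg : g * μ = s) :
    (κ * u + g * r)^2 ≤ (1 - s/2) * u^2 + (s^2 + 8*s) * r^2 / μ^2 := by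
  have hgv : g = s / μ := by field_simp at hg ⊢; linarith [hg]
  have h2ab : 2*(κ*u)*(g*r) ≤ (s/8)*(κ*u)^2 + (8/s)*(g*r)^2 := by
    have key : (s/8)*(κ*u)^2 + (8/s)*(g*r)^2 - 2*(κ*u)*(g*r)
        = (s*(κ*u) - 8*(g*r))^2 / (8*s) := by
      field_simp
      ring
    nlinarith [sq_nonneg (s*(κ*u) - 8*(g*r)),
      div_nonneg (sq_nonneg (s*(κ*u) - 8*(g*r))) (by linarith : (0:ℝ) ≤ 8*s)]
  have h1 : (κ*u + g*r)^2 ≤ (1 + s/8)*(κ*u)^2 + (1 + 8/s)*(g*r)^2 := by nlinarith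
  have h2 : (1 + s/8)*(κ*u)^2 ≤ (1 - s/2)*u^2 := by
    have hκ2 : (1 + s/8)*κ^2 ≤ 1 - s/2 := by
      have hκs : κ^2 ≤ (1 - s/3)^2 := by nlinarith
      nlinarith [mul_le_mul_of_nonneg_left hκs (by linarith : (0:ℝ) ≤ 1 + s/8),
        mul_pos hs0 hs0, sq_nonneg s, mul_nonneg (mul_nonneg hs0.le hs0.le) hs0.le]
    calc (1 + s/8)*(κ*u)^2 = ((1 + s/8)*κ^2) * u^2 := by ring
    _ ≤ (1 - s/2)*u^2 := mul_le_mul_of_nonneg_right hκ2 (sq_nonneg u)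
  have h3 : (1 + 8/s)*(g*r)^2 = (s^2 + 8*s) * r^2 / μ^2 := by
    rw [hgv]
    field_simp
  linarith

/-- Convergence of deterministic FedAvg in the twice-differentiable
federated setting: with server learning rate `0 < α ≤ 1/8`, local learning rate
`0 < η ≤ min{1/L, 1/(μH)}`, global minimizer `w*` and drift `ρ = ‖G(w*)‖`,
`‖w^{(T)} - w*‖² ≤ (1 - αηHμ/2)^T ‖w^{(0)} - w*‖² + 20ρ²/μ²`. -/
theorem stmt_15
    {E : Type*} [NormedAddCommGroup E] [InnerProductSpace ℝ E] [FiniteDimensional ℝ E]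
    {M : ℕ} (p : Fin M → ℝ) (hp : ∀ c, 0 ≤ p c) (hpsum : ∑ c, p c = 1)
    (Fc : Fin M → E → ℝ) (Fc' : Fin M → E → E) (Fc'' : Fin M → E → (E →L[ℝ] E))
    (hgrad : ∀ c x, HasGradientAt (Fc c) (Fc' c x) x)
    (hhess : ∀ c x, HasFDerivAt (Fc' c) (Fc'' c x) x)
    (hcont : ∀ c, Continuous (Fc'' c))
    (μ L : ℝ) (hμ : 0 < μ) (hμL : μ ≤ L)
    (hlow : ∀ c (x v : E), μ * ‖v‖ ^ 2 ≤ (inner ℝ (Fc'' c x v) v : ℝ))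
    (hup : ∀ c (x v : E), ‖Fc'' c x v‖ ≤ L * ‖v‖)
    (H : ℕ) (hH : 1 ≤ H)
    (η : ℝ) (hη : 0 < η) (hηmax : η ≤ min (1 / L) (1 / (μ * H)))
    (α : ℝ) (hα : 0 < α) (hαmax : α ≤ 1 / 8)
    (wIter : Fin M → ℕ → E → E)
    (hIter0 : ∀ c w, wIter c 0 w = w)
    (hIterS : ∀ c h w, wIter c (h + 1) w = wIter c h w - η • Fc' c (wIter c h w))
    (G : E → E)
    (hG : ∀ w, G w = ∑ c, p c • ((η * H)⁻¹ • (w - wIter c H w)))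
    (wopt : E) (hopt : ∀ u : E, ∑ c, p c * Fc c wopt ≤ ∑ c, p c * Fc c u)
    (wSeq : ℕ → E)
    (hSeq : ∀ t, wSeq (t + 1) = wSeq t - (α * η * H) • G (wSeq t)) :
    ∀ T : ℕ,
      ‖wSeq T - wopt‖ ^ 2 ≤
        (1 - α * η * H * μ / 2) ^ T * ‖wSeq 0 - wopt‖ ^ 2 + 20 * ‖G wopt‖ ^ 2 / μ ^ 2 := by
  have hL : 0 < L := lt_of_lt_of_le hμ hμL
  have hH1 : (1:ℝ) ≤ (H:ℝ) := by exact_mod_cast hH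
  have hHpos : (0:ℝ) < (H:ℝ) := by linarith
  have hηL : η * L ≤ 1 := by
    have h1 := le_trans hηmax (min_le_left _ _)
    rw [le_div_iff₀ hL] at h1
    linarith
  have hyle : η * μ * (H:ℝ) ≤ 1 := by
    have h2 := le_trans hηmax (min_le_right _ _)
    have hμH : 0 < μ * (H:ℝ) := mul_pos hμ hHpos
    rw [le_div_iff₀ hμH] at h2
    have he : η * μ * (H:ℝ) = η * (μ * (H:ℝ)) := by ring
    linarith
  have hx1 : η * μ ≤ 1 := by
    have h := mul_nonneg (mul_pos hη hμ).le (by linarith : (0:ℝ) ≤ (H:ℝ) - 1)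
    nlinarith
  have hx0 : 0 ≤ η * μ := by positivity
  set b := Real.sqrt (1 - η * μ) with hbdef
  have hb0 : 0 ≤ b := Real.sqrt_nonneg _
  have hb2 : b ^ 2 = 1 - η * μ := Real.sq_sqrt (by linarith)
  have hsym : ∀ c (x v w : E), (inner ℝ (Fc'' c x v) w : ℝ) = inner ℝ (Fc'' c x w) v :=
    fun c x v w => sym_aux (Fc c) (Fc' c) (Fc'' c) (hgrad c) (hhess c) x v w
  have hlip : ∀ c (x y : E), ‖(x - η • Fc' c x) - (y - η • Fc' c y)‖ ≤ b * ‖x - y‖ := by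
    intro c x y
    exact gd_step_lip (Fc' c) (Fc'' c) (hhess c) μ η hx1
      (fun z v => step_norm (Fc'' c z) μ L η hμ hμL hη hηL (hsym c z)
        (fun v => hlow c z v) (fun v => hup c z v) v) x y
  have hiter : ∀ c (h : ℕ) (x y : E), ‖wIter c h x - wIter c h y‖ ≤ b ^ h * ‖x - y‖ := by
    intro c h
    induction h with
    | zero => intro x y; simp [hIter0]
    | succ n ih =>
      intro x y
      rw [hIterS, hIterS]
      calc ‖(wIter c n x - η • Fc' c (wIter c n x)) - (wIter c n y - η • Fc' c (wIter c n y))‖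
          ≤ b * ‖wIter c n x - wIter c n y‖ := hlip c _ _
        _ ≤ b * (b ^ n * ‖x - y‖) := mul_le_mul_of_nonneg_left (ih x y) hb0
        _ = b ^ (n + 1) * ‖x - y‖ := by ring
  have hβ0 : 0 ≤ b ^ H := pow_nonneg hb0 H
  have hββ : b ^ H ≤ 1 - (H:ℝ) * (η * μ) / 3 := by
    have hbb : (b ^ H) ^ 2 = (1 - η * μ) ^ H := by
      rw [← pow_mul, Nat.mul_comm, pow_mul, hb2]
    have he : (H:ℝ) * (η * μ) = η * μ * (H:ℝ) := by ring
    have hbound := beta_bound (η * μ) H hx0 hx1 (by linarith)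
    have hc0 : 0 ≤ 1 - (H:ℝ) * (η * μ) / 3 := by linarith
    calc b ^ H = Real.sqrt ((b ^ H) ^ 2) := (Real.sqrt_sq hβ0).symm
      _ ≤ Real.sqrt ((1 - (H:ℝ) * (η * μ) / 3) ^ 2) := by
          rw [hbb]; exact Real.sqrt_le_sqrt hbound
      _ = 1 - (H:ℝ) * (η * μ) / 3 := Real.sqrt_sq hc0
  set γ := α * η * (H:ℝ) with hγdef
  have hγ0 : 0 ≤ γ := by positivity
  set κ := 1 - α + α * b ^ H with hκdef
  have hκ0 : 0 ≤ κ := by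
    have h := mul_nonneg hα.le hβ0
    rw [hκdef]
    linarith
  have hηH0 : (η * (H:ℝ)) ≠ 0 := ne_of_gt (mul_pos hη hHpos)
  have hαγ : γ * (η * (H:ℝ))⁻¹ = α := by
    rw [hγdef]
    field_simp
  have hsmulG : ∀ v : Fin M → E,
      γ • (∑ c, p c • ((η * (H:ℝ))⁻¹ • v c)) = ∑ c, p c • (α • v c) := by
    intro v
    rw [Finset.smul_sum]
    refine Finset.sum_congr rfl fun c _ => ?_
    rw [smul_comm γ (p c), smul_smul γ, hαγ]
  have hid : ∀ w : E, (w - γ • G w) - (wopt - γ • G wopt)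
      = ∑ c, p c • ((1 - α) • (w - wopt) + α • (wIter c H w - wIter c H wopt)) := by
    intro w
    have base : w - wopt = ∑ c, p c • (w - wopt) := by
      rw [← Finset.sum_smul, hpsum, one_smul]
    calc (w - γ • G w) - (wopt - γ • G wopt)
        = (w - wopt) - γ • G w + γ • G wopt := by abel
      _ = ∑ c, p c • (w - wopt) - ∑ c, p c • (α • (w - wIter c H w))
            + ∑ c, p c • (α • (wopt - wIter c H wopt)) := by
          rw [hG w, hG wopt, hsmulG (fun c => w - wIter c H w),
            hsmulG (fun c => wopt - wIter c H wopt), ← base]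
      _ = ∑ c, (p c • (w - wopt) - p c • (α • (w - wIter c H w))
            + p c • (α • (wopt - wIter c H wopt))) := by
          rw [Finset.sum_add_distrib, Finset.sum_sub_distrib]
      _ = ∑ c, p c • ((1 - α) • (w - wopt) + α • (wIter c H w - wIter c H wopt)) := by
          refine Finset.sum_congr rfl fun c _ => ?_
          rw [← smul_sub, ← smul_add]
          congr 1
          module
  have hcontr : ∀ w : E, ‖(w - γ • G w) - (wopt - γ • G wopt)‖ ≤ κ * ‖w - wopt‖ := by
    intro w
    rw [hid w]
    calc ‖∑ c, p c • ((1 - α) • (w - wopt) + α • (wIter c H w - wIter c H wopt))‖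
        ≤ ∑ c, ‖p c • ((1 - α) • (w - wopt) + α • (wIter c H w - wIter c H wopt))‖ :=
          norm_sum_le _ _
      _ ≤ ∑ c, p c * (κ * ‖w - wopt‖) := by
          refine Finset.sum_le_sum fun c _ => ?_
          rw [norm_smul, Real.norm_eq_abs, abs_of_nonneg (hp c)]
          refine mul_le_mul_of_nonneg_left ?_ (hp c)
          calc ‖(1 - α) • (w - wopt) + α • (wIter c H w - wIter c H wopt)‖
              ≤ ‖(1 - α) • (w - wopt)‖ + ‖α • (wIter c H w - wIter c H wopt)‖ :=
                norm_add_le _ _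
            _ = (1 - α) * ‖w - wopt‖ + α * ‖wIter c H w - wIter c H wopt‖ := by
                rw [norm_smul, norm_smul, Real.norm_eq_abs, Real.norm_eq_abs,
                  abs_of_nonneg (by linarith : (0:ℝ) ≤ 1 - α), abs_of_nonneg hα.le]
            _ ≤ (1 - α) * ‖w - wopt‖ + α * (b ^ H * ‖w - wopt‖) := by
                have h := mul_le_mul_of_nonneg_left (hiter c H w wopt) hα.le
                linarith
            _ = κ * ‖w - wopt‖ := by rw [hκdef]; ring
      _ = κ * ‖w - wopt‖ := by
          rw [← Finset.sum_mul, hpsum, one_mul]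
  have hrec : ∀ t, ‖wSeq (t + 1) - wopt‖ ≤ κ * ‖wSeq t - wopt‖ + γ * ‖G wopt‖ := by
    intro t
    have e : wSeq (t + 1) - wopt
        = ((wSeq t - γ • G (wSeq t)) - (wopt - γ • G wopt)) - γ • G wopt := by
      rw [hSeq t]
      abel
    rw [e]
    calc ‖((wSeq t - γ • G (wSeq t)) - (wopt - γ • G wopt)) - γ • G wopt‖
        ≤ ‖(wSeq t - γ • G (wSeq t)) - (wopt - γ • G wopt)‖ + ‖γ • G wopt‖ :=
          norm_sub_le _ _
      _ ≤ κ * ‖wSeq t - wopt‖ + γ * ‖G wopt‖ := by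
          have h := hcontr (wSeq t)
          rw [norm_smul, Real.norm_eq_abs, abs_of_nonneg hγ0]
          linarith
  set s := α * (η * μ * (H:ℝ)) with hsdef
  have hyc : 0 < η * μ * (H:ℝ) := by positivity
  have hs0 : 0 < s := mul_pos hα hyc
  have hsle : s ≤ 1/8 := by
    rw [hsdef]
    calc α * (η * μ * (H:ℝ)) ≤ α * 1 := mul_le_mul_of_nonneg_left hyle hα.le
    _ = α := mul_one α
    _ ≤ 1/8 := hαmax
  have hγμ : γ * μ = s := by rw [hγdef, hsdef]; ring
  have hκle : κ ≤ 1 - s/3 := by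
    rw [hκdef, hsdef]
    have h := mul_le_mul_of_nonneg_left hββ hα.le
    nlinarith [h]
  have hθ0 : (0:ℝ) ≤ 1 - s/2 := by linarith
  have hQ0 : 0 ≤ (2*s + 16) * ‖G wopt‖ ^ 2 / μ ^ 2 :=
    div_nonneg (mul_nonneg (by linarith) (sq_nonneg _)) (sq_nonneg μ)
  clear_value b γ κ s
  have main : ∀ t : ℕ, ‖wSeq t - wopt‖ ^ 2
      ≤ (1 - s/2) ^ t * ‖wSeq 0 - wopt‖ ^ 2 + (2*s + 16) * ‖G wopt‖ ^ 2 / μ ^ 2 := by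
    intro t
    induction t with
    | zero => simp only [pow_zero, one_mul]; linarith
    | succ n ih =>
      have h1 := hrec n
      have h0 : 0 ≤ κ * ‖wSeq n - wopt‖ + γ * ‖G wopt‖ :=
        add_nonneg (mul_nonneg hκ0 (norm_nonneg _)) (mul_nonneg hγ0 (norm_nonneg _))
      have h2 : ‖wSeq (n + 1) - wopt‖ ^ 2
          ≤ (κ * ‖wSeq n - wopt‖ + γ * ‖G wopt‖) ^ 2 :=
        pow_le_pow_left₀ (norm_nonneg _) h1 2
      have h3 := sq_rec s κ γ μ (‖wSeq n - wopt‖) (‖G wopt‖) hs0 hsle hκ0 hκle hμ hγμ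
      have h4 := mul_le_mul_of_nonneg_left ih hθ0
      have h5 : (1 - s/2) * ((1 - s/2) ^ n * ‖wSeq 0 - wopt‖ ^ 2
            + (2*s + 16) * ‖G wopt‖ ^ 2 / μ ^ 2)
          = (1 - s/2) ^ (n + 1) * ‖wSeq 0 - wopt‖ ^ 2
            + (1 - s/2) * ((2*s + 16) * ‖G wopt‖ ^ 2 / μ ^ 2) := by
        rw [pow_succ]; ring
      have h6 : (1 - s/2) * ((2*s + 16) * ‖G wopt‖ ^ 2 / μ ^ 2)
            + (s^2 + 8*s) * ‖G wopt‖ ^ 2 / μ ^ 2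
          = (2*s + 16) * ‖G wopt‖ ^ 2 / μ ^ 2 := by
        field_simp
        ring
      linarith only [h2, h3, h4, h5, h6]
  intro T
  have hfin := main T
  have hbase : (1 - γ * μ / 2) = 1 - s/2 := by rw [hγμ]
  rw [hbase]
  have hQ : (2*s + 16) * ‖G wopt‖ ^ 2 / μ ^ 2 ≤ 20 * ‖G wopt‖ ^ 2 / μ ^ 2 := by
    have hd : (0:ℝ) ≤ ‖G wopt‖ ^ 2 / μ ^ 2 := div_nonneg (sq_nonneg _) (sq_nonneg _)
    calc (2*s + 16) * ‖G wopt‖ ^ 2 / μ ^ 2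
        = (2*s + 16) * (‖G wopt‖ ^ 2 / μ ^ 2) := by ring
      _ ≤ 20 * (‖G wopt‖ ^ 2 / μ ^ 2) := mul_le_mul_of_nonneg_right (by linarith) hd
      _ = 20 * ‖G wopt‖ ^ 2 / μ ^ 2 := by ring
  linarith
end

section
/- Under the twice-differentiable federated setting, let w* be the minimizer of the global objective F = E_c[F_c], let ρ = ‖G(w*)‖ denote the average drift at optimum, and set κ = L/μ. Consider deterministic FedAvg iterates w^{(t+1)} = w^{(t)} − αηH·G(w^{(t)}) with server learning rate α = 1/8 and local learning rate η = min{1/L, 1/(μH)}. Then for every T ≥ 0, ‖w^{(T)} − w*‖² ≤ exp(−(T/(16κ))·min{κ, H})·‖w^{(0)} − w*‖² + 20ρ²/μ². -/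
set_option maxHeartbeats 1000000

open scoped RealInnerProductSpace

section auxFedAvg
variable {E : Type*} [NormedAddCommGroup E] [InnerProductSpace ℝ E]

private lemma fedavg_cs_psd (A : E →L[ℝ] E)
    (hsym : ∀ v w : E, ⟪A v, w⟫ = ⟪A w, v⟫)
    (hpos : ∀ v : E, 0 ≤ ⟪A v, v⟫) (v w : E) :
    ⟪A v, w⟫ ^ 2 ≤ ⟪A v, v⟫ * ⟪A w, w⟫ := by
  have key : ∀ t : ℝ, 0 ≤ ⟪A w, w⟫ * (t * t) + (2 * ⟪A v, w⟫) * t + ⟪A v, v⟫ := by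
    intro t
    have h0 := hpos (v + t • w)
    have he : ⟪A (v + t • w), v + t • w⟫
        = ⟪A v, v⟫ + t * ⟪A v, w⟫ + (t * ⟪A w, v⟫ + t * (t * ⟪A w, w⟫)) := by
      simp [map_add, map_smul, inner_add_left, inner_add_right,
        real_inner_smul_left, real_inner_smul_right]
      ring
    rw [he, hsym w v] at h0
    nlinarith [h0]
  have hd := discrim_le_zero key
  rw [discrim] at hd
  nlinarith [hd]

private lemma fedavg_psd_norm_le (B : E →L[ℝ] E) {c : ℝ} (hc : 0 ≤ c)
    (hsym : ∀ v w : E, ⟪B v, w⟫ = ⟪B w, v⟫)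
    (hpos : ∀ v : E, 0 ≤ ⟪B v, v⟫)
    (hub : ∀ v : E, ⟪B v, v⟫ ≤ c * ‖v‖ ^ 2) (v : E) :
    ‖B v‖ ≤ c * ‖v‖ := by
  have h1 : ⟪B v, B v⟫ ^ 2 ≤ ⟪B v, v⟫ * ⟪B (B v), B v⟫ :=
    fedavg_cs_psd B hsym hpos v (B v)
  have h2 : ⟪B (B v), B v⟫ ≤ c * ‖B v‖ ^ 2 := hub (B v)
  have h3 : ⟪B v, B v⟫ = ‖B v‖ ^ 2 := real_inner_self_eq_norm_sq _
  have h4 : ‖B v‖ ^ 2 ≤ c * ⟪B v, v⟫ := by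
    rcases eq_or_lt_of_le (norm_nonneg (B v)) with h0 | h0
    · have hz : B v = 0 := norm_eq_zero.mp h0.symm
      simp [hz]
    · have h5 : (‖B v‖ ^ 2) * ‖B v‖ ^ 2 ≤ (c * ⟪B v, v⟫) * ‖B v‖ ^ 2 := by
        nlinarith [mul_le_mul_of_nonneg_left h2 (hpos v)]
      exact le_of_mul_le_mul_right h5 (by positivity)
  have h6 : ‖B v‖ ^ 2 ≤ (c * ‖v‖) ^ 2 := by
    calc ‖B v‖ ^ 2 ≤ c * ⟪B v, v⟫ := h4
      _ ≤ c * (c * ‖v‖ ^ 2) := mul_le_mul_of_nonneg_left (hub v) hc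
      _ = (c * ‖v‖) ^ 2 := by ring
  have h7 : 0 ≤ c * ‖v‖ := by positivity
  nlinarith [norm_nonneg (B v)]

private lemma fedavg_step_contract (A : E →L[ℝ] E) {μ L η : ℝ} (hμ : 0 < μ) (hμL : μ ≤ L)
    (hη : 0 ≤ η) (hηL : η * L ≤ 1)
    (hsym : ∀ v w : E, ⟪A v, w⟫ = ⟪A w, v⟫)
    (hlow : ∀ v : E, μ * ‖v‖ ^ 2 ≤ ⟪A v, v⟫)
    (hup : ∀ v : E, ‖A v‖ ≤ L * ‖v‖) (v : E) :
    ‖v - η • A v‖ ≤ (1 - η * μ) * ‖v‖ := by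
  have hημ : η * μ ≤ 1 := le_trans (by nlinarith) hηL
  set B : E →L[ℝ] E := ContinuousLinearMap.id ℝ E - η • A with hB
  have hBapp : ∀ u : E, B u = u - η • A u := fun u => rfl
  have hBsym : ∀ u w : E, ⟪B u, w⟫ = ⟪B w, u⟫ := by
    intro u w
    simp only [hBapp, inner_sub_left, real_inner_smul_left, hsym u w]
    rw [real_inner_comm u w]
  have hAub : ∀ u : E, ⟪A u, u⟫ ≤ L * ‖u‖ ^ 2 := by
    intro u
    calc ⟪A u, u⟫ ≤ ‖A u‖ * ‖u‖ := real_inner_le_norm _ _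
      _ ≤ L * ‖u‖ ^ 2 := by nlinarith [hup u, norm_nonneg u]
  have hBpos : ∀ u : E, 0 ≤ ⟪B u, u⟫ := by
    intro u
    have h := hAub u
    simp only [hBapp, inner_sub_left, real_inner_smul_left,
      real_inner_self_eq_norm_sq]
    nlinarith [norm_nonneg u, sq_nonneg ‖u‖]
  have hBub : ∀ u : E, ⟪B u, u⟫ ≤ (1 - η * μ) * ‖u‖ ^ 2 := by
    intro u
    have h := hlow u
    simp only [hBapp, inner_sub_left, real_inner_smul_left,
      real_inner_self_eq_norm_sq]
    nlinarith
  have := fedavg_psd_norm_le B (by linarith) hBsym hBpos hBub v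
  simpa [hBapp] using this

private lemma fedavg_hess_symm [CompleteSpace E] {f : E → ℝ} {g : E → E}
    {A : E → (E →L[ℝ] E)}
    (hg : ∀ x, HasGradientAt f (g x) x)
    (hA : ∀ x, HasFDerivAt g (A x) x) (x v w : E) :
    ⟪A x v, w⟫ = ⟪A x w, v⟫ := by
  set f' : E → (E →L[ℝ] ℝ) := fun y => (innerSL ℝ (g y) : E →L[ℝ] ℝ) with hf'
  have hfd : ∀ y, HasFDerivAt f (f' y) y := by
    intro y
    have h := (hg y).hasFDerivAt
    have : (InnerProductSpace.toDual ℝ E (g y) : E →L[ℝ] ℝ) = f' y := by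
      ext u
      simp [hf', InnerProductSpace.toDual_apply_apply]
    rwa [this] at h
  have hfd2 : HasFDerivAt f' ((innerSL ℝ : E →L[ℝ] E →L[ℝ] ℝ).comp (A x)) x :=
    ((innerSL ℝ : E →L[ℝ] E →L[ℝ] ℝ).hasFDerivAt).comp x (hA x)
  have := second_derivative_symmetric hfd hfd2 v w
  simpa [real_inner_comm] using this

private lemma fedavg_gd_step_lip {g : E → E} {A : E → E →L[ℝ] E}
    (hA : ∀ x, HasFDerivAt g (A x) x) {η c : ℝ} (hc : 0 ≤ c)
    (hb : ∀ (x v : E), ‖v - η • A x v‖ ≤ c * ‖v‖) (x y : E) :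
    ‖(x - η • g x) - (y - η • g y)‖ ≤ c * ‖x - y‖ := by
  have hd : ∀ z : E, HasFDerivAt (fun z => z - η • g z)
      (ContinuousLinearMap.id ℝ E - η • A z) z := by
    intro z
    exact (hasFDerivAt_id z).sub ((hA z).const_smul η)
  have hbound : ∀ z : E, ‖ContinuousLinearMap.id ℝ E - η • A z‖ ≤ c := by
    intro z
    refine ContinuousLinearMap.opNorm_le_bound _ hc fun v => ?_
    simpa using hb z v
  have := Convex.norm_image_sub_le_of_norm_hasFDerivWithin_le
    (f := fun z => z - η • g z) (f' := fun z => ContinuousLinearMap.id ℝ E - η • A z)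
    (fun z _ => (hd z).hasFDerivWithinAt) (fun z _ => hbound z)
    (convex_univ) (Set.mem_univ y) (Set.mem_univ x)
  simpa [norm_sub_rev x y] using this

end auxFedAvg

/-- Linear convergence rate of deterministic FedAvg in the
twice-differentiable federated setting with `α = 1/8`, `η = min{1/L, 1/(μH)}` and
`κ = L/μ`: `‖w^{(T)} - w*‖² ≤ exp(-(T/(16κ)) min{κ, H}) ‖w^{(0)} - w*‖² + 20ρ²/μ²`. -/
theorem stmt_16
    {E : Type*} [NormedAddCommGroup E] [InnerProductSpace ℝ E] [FiniteDimensional ℝ E]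
    {M : ℕ} (p : Fin M → ℝ) (hp : ∀ c, 0 ≤ p c) (hpsum : ∑ c, p c = 1)
    (Fc : Fin M → E → ℝ) (Fc' : Fin M → E → E) (Fc'' : Fin M → E → (E →L[ℝ] E))
    (hgrad : ∀ c x, HasGradientAt (Fc c) (Fc' c x) x)
    (hhess : ∀ c x, HasFDerivAt (Fc' c) (Fc'' c x) x)
    (hcont : ∀ c, Continuous (Fc'' c))
    (μ L : ℝ) (hμ : 0 < μ) (hμL : μ ≤ L)
    (hlow : ∀ c (x v : E), μ * ‖v‖ ^ 2 ≤ (inner ℝ (Fc'' c x v) v : ℝ))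
    (hup : ∀ c (x v : E), ‖Fc'' c x v‖ ≤ L * ‖v‖)
    (H : ℕ) (hH : 1 ≤ H)
    (η : ℝ) (hηdef : η = min (1 / L) (1 / (μ * H)))
    (wIter : Fin M → ℕ → E → E)
    (hIter0 : ∀ c w, wIter c 0 w = w)
    (hIterS : ∀ c h w, wIter c (h + 1) w = wIter c h w - η • Fc' c (wIter c h w))
    (G : E → E)
    (hG : ∀ w, G w = ∑ c, p c • ((η * H)⁻¹ • (w - wIter c H w)))
    (wopt : E) (hopt : ∀ u : E, ∑ c, p c * Fc c wopt ≤ ∑ c, p c * Fc c u)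
    (wSeq : ℕ → E)
    (hSeq : ∀ t, wSeq (t + 1) = wSeq t - (1 / 8 * η * H) • G (wSeq t)) :
    ∀ T : ℕ,
      ‖wSeq T - wopt‖ ^ 2 ≤
        Real.exp (-(T / (16 * (L / μ))) * min (L / μ) (H : ℝ)) * ‖wSeq 0 - wopt‖ ^ 2 +
          20 * ‖G wopt‖ ^ 2 / μ ^ 2 := by
  haveI : CompleteSpace E := FiniteDimensional.complete ℝ E
  have hL : 0 < L := lt_of_lt_of_le hμ hμL
  have hHpos : (0 : ℝ) < H := by exact_mod_cast Nat.lt_of_lt_of_le Nat.zero_lt_one hH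
  have hH1 : (1 : ℝ) ≤ H := by exact_mod_cast hH
  have hη0 : 0 < η := by
    rw [hηdef]
    exact lt_min (by positivity) (by positivity)
  have hηL : η * L ≤ 1 := by
    have : η ≤ 1 / L := hηdef ▸ min_le_left _ _
    calc η * L ≤ (1 / L) * L := by nlinarith
      _ = 1 := by field_simp
  have hημH : η * (μ * H) ≤ 1 := by
    have : η ≤ 1 / (μ * H) := hηdef ▸ min_le_right _ _
    have hμH : (0:ℝ) < μ * H := by positivity
    calc η * (μ * H) ≤ (1 / (μ * H)) * (μ * H) := by nlinarith
      _ = 1 := by field_simp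
  -- key quantities
  set x : ℝ := η * μ with hxdef
  have hx0 : 0 < x := by positivity
  have hx1 : x ≤ 1 := le_trans (by nlinarith) hηL
  set s : ℝ := η * μ * H with hsdef
  have hs0 : 0 < s := by positivity
  have hs1 : s ≤ 1 := by rw [hsdef]; nlinarith
  set k : ℝ := 1 - x with hkdef
  have hk0 : 0 ≤ k := by rw [hkdef]; linarith
  set K : ℝ := k ^ H with hKdef
  have hK0 : 0 ≤ K := pow_nonneg hk0 H
  -- symmetry of Hessians
  have hsym : ∀ c (y v w : E), ⟪Fc'' c y v, w⟫ = ⟪Fc'' c y w, v⟫ := fun c y v w =>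
    fedavg_hess_symm (hgrad c) (hhess c) y v w
  -- one local GD step is (1-ημ)-Lipschitz
  have hsteplip : ∀ c (y y' : E),
      ‖(y - η • Fc' c y) - (y' - η • Fc' c y')‖ ≤ k * ‖y - y'‖ := by
    intro c y y'
    refine fedavg_gd_step_lip (hhess c) hk0 (fun z v => ?_) y y'
    exact fedavg_step_contract (Fc'' c z) hμ hμL hη0.le hηL
      (hsym c z) (fun v => hlow c z v) (fun v => hup c z v) v
  -- H local steps are (1-ημ)^H-Lipschitz
  have hIterLip : ∀ c (h : ℕ) (y y' : E),
      ‖wIter c h y - wIter c h y'‖ ≤ k ^ h * ‖y - y'‖ := by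
    intro c h
    induction h with
    | zero => intro y y'; simp [hIter0]
    | succ n ih =>
        intro y y'
        rw [hIterS, hIterS]
        calc ‖(wIter c n y - η • Fc' c (wIter c n y))
              - (wIter c n y' - η • Fc' c (wIter c n y'))‖
            ≤ k * ‖wIter c n y - wIter c n y'‖ := hsteplip c _ _
          _ ≤ k * (k ^ n * ‖y - y'‖) :=
              mul_le_mul_of_nonneg_left (ih y y') hk0
          _ = k ^ (n + 1) * ‖y - y'‖ := by ring
  -- the FedAvg map
  set Φ : E → E := fun w => w - (1 / 8 * η * H) • G w with hΦdef
  have hηH : (η * (H:ℝ)) ≠ 0 := by positivity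
  have hPhi : ∀ w, Φ w = (7/8 : ℝ) • w + (8:ℝ)⁻¹ • ∑ c, p c • wIter c H w := by
    intro w
    have h1 : (1 / 8 * η * H) • G w
        = (8:ℝ)⁻¹ • (w - ∑ c, p c • wIter c H w) := by
      rw [hG, Finset.smul_sum]
      have h2 : ∀ c : Fin M, (1 / 8 * η * (H:ℝ)) • (p c • ((η * H)⁻¹ • (w - wIter c H w)))
          = (8:ℝ)⁻¹ • (p c • (w - wIter c H w)) := by
        intro c
        simp only [smul_smul]
        congr 1
        field_simp
      rw [Finset.sum_congr rfl fun c _ => h2 c, ← Finset.smul_sum]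
      congr 1
      simp only [smul_sub]
      rw [Finset.sum_sub_distrib, ← Finset.sum_smul, hpsum, one_smul]
    rw [hΦdef]
    simp only [h1]
    rw [smul_sub]
    module
  have hPhiLip : ∀ w w', ‖Φ w - Φ w'‖ ≤ (7/8 + K/8) * ‖w - w'‖ := by
    intro w w'
    rw [hPhi, hPhi]
    have hdiff : ((7/8 : ℝ) • w + (8:ℝ)⁻¹ • ∑ c, p c • wIter c H w)
        - ((7/8 : ℝ) • w' + (8:ℝ)⁻¹ • ∑ c, p c • wIter c H w')
        = (7/8 : ℝ) • (w - w') + (8:ℝ)⁻¹ • ∑ c, p c • (wIter c H w - wIter c H w') := by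
      simp only [smul_sub, Finset.sum_sub_distrib]
      module
    rw [hdiff]
    have hsum : ‖∑ c, p c • (wIter c H w - wIter c H w')‖ ≤ K * ‖w - w'‖ := by
      calc ‖∑ c, p c • (wIter c H w - wIter c H w')‖
          ≤ ∑ c, ‖p c • (wIter c H w - wIter c H w')‖ := norm_sum_le _ _
        _ ≤ ∑ c, p c * (K * ‖w - w'‖) := by
            refine Finset.sum_le_sum fun c _ => ?_
            rw [norm_smul, Real.norm_eq_abs, abs_of_nonneg (hp c)]
            exact mul_le_mul_of_nonneg_left (hIterLip c H w w') (hp c)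
        _ = K * ‖w - w'‖ := by rw [← Finset.sum_mul, hpsum, one_mul]
    calc ‖(7/8 : ℝ) • (w - w') + (8:ℝ)⁻¹ • ∑ c, p c • (wIter c H w - wIter c H w')‖
        ≤ ‖(7/8 : ℝ) • (w - w')‖ + ‖(8:ℝ)⁻¹ • ∑ c, p c • (wIter c H w - wIter c H w')‖ :=
          norm_add_le _ _
      _ ≤ (7/8) * ‖w - w'‖ + (8:ℝ)⁻¹ * (K * ‖w - w'‖) := by
          rw [norm_smul, norm_smul]
          simp only [Real.norm_eq_abs]
          rw [abs_of_nonneg (by norm_num : (0:ℝ) ≤ 7/8), abs_of_nonneg (by norm_num : (0:ℝ) ≤ (8:ℝ)⁻¹)]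
          have := mul_le_mul_of_nonneg_left hsum (by norm_num : (0:ℝ) ≤ (8:ℝ)⁻¹)
          linarith
      _ = (7/8 + K/8) * ‖w - w'‖ := by ring
  set q : ℝ := 7/8 + K/8 with hqdef
  have hq0 : 0 ≤ q := by rw [hqdef]; linarith
  -- K ≤ 1 - s/2
  have hKbound : K ≤ 1 - s/2 := by
    have hx2 : (0:ℝ) < 1 + x := by linarith
    have hk_inv : k ≤ 1 / (1 + x) := by
      rw [le_div_iff₀ hx2]
      nlinarith
    have h2 : K ≤ 1 / (1 + x) ^ H := by
      calc K ≤ (1 / (1 + x)) ^ H := pow_le_pow_left₀ hk0 hk_inv H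
        _ = 1 / (1 + x) ^ H := by rw [div_pow, one_pow]
    have h3 : 1 + (H:ℝ) * x ≤ (1 + x) ^ H :=
      one_add_mul_le_pow (by linarith : (-2:ℝ) ≤ x) H
    have hsHx : s = (H:ℝ) * x := by rw [hsdef, hxdef]; ring
    have h4 : 1 / (1 + x) ^ H ≤ 1 / (1 + s) := by
      rw [hsHx]
      exact one_div_le_one_div_of_le (by positivity) h3
    have h5 : 1 / (1 + s) ≤ 1 - s/2 := by
      rw [div_le_iff₀ (by linarith : (0:ℝ) < 1 + s)]
      nlinarith
    linarith
  have h1q : s/16 ≤ 1 - q := by rw [hqdef]; linarith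
  have hq1 : q ≤ 1 - s/16 := by linarith
  -- drift quantities
  set ρ : ℝ := ‖G wopt‖ with hρdef
  have hρ0 : 0 ≤ ρ := norm_nonneg _
  set b : ℝ := 1/8 * η * H * ρ with hbdef
  have hb0 : 0 ≤ b := by rw [hbdef]; positivity
  set B : ℝ := b / (1 - q) with hBdef
  have h1q0 : (0:ℝ) < 1 - q := lt_of_lt_of_le (by positivity) h1q
  have hB0 : 0 ≤ B := div_nonneg hb0 h1q0.le
  have hbB : b = (1 - q) * B := by
    rw [hBdef, mul_div_cancel₀ _ (ne_of_gt h1q0)]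
  have hBle : B ≤ 2 * ρ / μ := by
    have h6 : B * (s/16) ≤ B * (1 - q) := mul_le_mul_of_nonneg_left h1q hB0
    have h7 : B * (1 - q) = b := by rw [hbB]; ring
    have h8 : B ≤ b / (s/16) := (le_div_iff₀ (by positivity)).mpr (le_of_le_of_eq h6 h7)
    have h9 : b / (s/16) = 2 * ρ / μ := by
      rw [hbdef, hsdef]
      field_simp
      ring
    linarith
  -- one-step distance bound
  have hstepb : ∀ t, ‖wSeq (t+1) - wopt‖ ≤ q * ‖wSeq t - wopt‖ + b := by
    intro t
    have hdec : wSeq (t+1) - wopt = (Φ (wSeq t) - Φ wopt) + (Φ wopt - wopt) := by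
      rw [hSeq t]
      show Φ (wSeq t) - wopt = _
      abel
    have hfix : ‖Φ wopt - wopt‖ = b := by
      have : Φ wopt - wopt = -((1/8 * η * (H:ℝ)) • G wopt) := by
        rw [hΦdef]; beta_reduce; exact sub_sub_cancel_left _ _
      rw [this, norm_neg, norm_smul, Real.norm_eq_abs,
        abs_of_nonneg (by positivity : (0:ℝ) ≤ 1/8 * η * (H:ℝ)), hbdef, hρdef]
    calc ‖wSeq (t+1) - wopt‖ = ‖(Φ (wSeq t) - Φ wopt) + (Φ wopt - wopt)‖ := by rw [hdec]
      _ ≤ ‖Φ (wSeq t) - Φ wopt‖ + ‖Φ wopt - wopt‖ := norm_add_le _ _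
      _ ≤ q * ‖wSeq t - wopt‖ + b := by
          rw [hfix]
          exact add_le_add_left (hPhiLip (wSeq t) wopt) b
  -- squared recursion
  have hrec : ∀ t, ‖wSeq (t+1) - wopt‖^2 ≤ q * ‖wSeq t - wopt‖^2 + (1-q) * B^2 := by
    intro t
    have h := hstepb t
    rw [hbB] at h
    have hr' : (0:ℝ) ≤ ‖wSeq (t+1) - wopt‖ := norm_nonneg _
    have hr : (0:ℝ) ≤ ‖wSeq t - wopt‖ := norm_nonneg _
    nlinarith [sq_nonneg (‖wSeq t - wopt‖ - B),
      mul_nonneg (mul_nonneg hq0 h1q0.le) (sq_nonneg (‖wSeq t - wopt‖ - B)),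
      mul_nonneg hq0 hr, mul_nonneg h1q0.le hB0]
  -- induction
  have hind : ∀ T : ℕ, ‖wSeq T - wopt‖^2 ≤ q^T * ‖wSeq 0 - wopt‖^2 + B^2 := by
    intro T
    induction T with
    | zero => simp; nlinarith [sq_nonneg B]
    | succ n ih =>
        calc ‖wSeq (n+1) - wopt‖^2 ≤ q * ‖wSeq n - wopt‖^2 + (1-q) * B^2 := hrec n
          _ ≤ q * (q^n * ‖wSeq 0 - wopt‖^2 + B^2) + (1-q) * B^2 :=
              add_le_add_left (mul_le_mul_of_nonneg_left ih hq0) _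
          _ = q^(n+1) * ‖wSeq 0 - wopt‖^2 + B^2 := by ring
  -- exponent identity
  have hLμ0 : (0:ℝ) < L / μ := by positivity
  have hfac : (1 / (L/μ)) * min (L/μ) (H:ℝ) = s := by
    rcases le_total L (μ * H) with hc | hc
    · have hmin : min (L/μ) (H:ℝ) = L/μ :=
        min_eq_left (by rw [div_le_iff₀ hμ]; nlinarith)
      have hηeq : η = 1 / (μ * H) := by
        rw [hηdef]
        exact min_eq_right (one_div_le_one_div_of_le hL hc)
      rw [hmin, hsdef, hηeq]
      field_simp
    · have hmin : min (L/μ) (H:ℝ) = (H:ℝ) :=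
        min_eq_right (by rw [le_div_iff₀ hμ]; nlinarith)
      have hηeq : η = 1 / L := by
        rw [hηdef]
        exact min_eq_left (one_div_le_one_div_of_le (by positivity) hc)
      rw [hmin, hsdef, hηeq]
      field_simp
  -- finish
  intro T
  have hq_exp : q ≤ Real.exp (-(s/16)) := by
    have := Real.add_one_le_exp (-(s/16))
    linarith
  have hqT : q^T ≤ Real.exp (-((T:ℝ) / (16 * (L / μ))) * min (L / μ) (H:ℝ)) := by
    have h1 : q^T ≤ (Real.exp (-(s/16)))^T := pow_le_pow_left₀ hq0 hq_exp T
    have h2 : (Real.exp (-(s/16)))^T = Real.exp ((T:ℝ) * (-(s/16))) := by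
      rw [← Real.exp_nat_mul]
    have h3 : -((T:ℝ) / (16 * (L / μ))) * min (L / μ) (H:ℝ) = (T:ℝ) * (-(s/16)) := by
      rw [← hfac]
      field_simp
    rw [h3, ← h2]
    exact h1
  have hBsq : B^2 ≤ 20 * ρ^2 / μ^2 := by
    have h1 : B^2 ≤ (2 * ρ / μ)^2 := pow_le_pow_left₀ hB0 hBle 2
    have h2 : (2 * ρ / μ)^2 = 4 * ρ^2 / μ^2 := by field_simp; ring
    have h3 : 4 * ρ^2 / μ^2 ≤ 20 * ρ^2 / μ^2 := by
      apply div_le_div_of_nonneg_right ?_ (by positivity)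
      · nlinarith [sq_nonneg ρ]
    linarith
  calc ‖wSeq T - wopt‖^2 ≤ q^T * ‖wSeq 0 - wopt‖^2 + B^2 := hind T
    _ ≤ Real.exp (-((T:ℝ) / (16 * (L / μ))) * min (L / μ) (H:ℝ)) * ‖wSeq 0 - wopt‖^2
        + 20 * ρ^2 / μ^2 :=
      add_le_add (mul_le_mul_of_nonneg_right hqT (sq_nonneg _)) hBsq
end
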